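/- Let 0 < p < 1 and let ρ = p·|Φ⁺⟩⟨Φ⁺| + (1−p)·|01⟩⟨01|, where |Φ⁺⟩ = (|00⟩ + |11⟩)/√2 (a rank-two two-qubit density matrix with normal form Σ(a,b,c,d) satisfying a−b = a+c = |d|). Then ρ can be quasi-purified arbitrarily close to a maximally entangled state: for every ε > 0 there exist invertible 2×2 complex matrices A, B with t := Tr((A†A ⊗ B†B) ρ) > 0 such that the filtered state ρ' = (A⊗B) ρ (A⊗B)† / t has concurrence C(ρ') > 1 − ε. -/

import Mathlib

open Matrix Complex Kronecker
open scoped ComplexOrder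

noncomputable section

/-- The Pauli matrix σ₀ (the 2×2 identity). -/
def pauli0 : Matrix (Fin 2) (Fin 2) ℂ := 1
/-- The Pauli matrix σ₁. -/
def pauli1 : Matrix (Fin 2) (Fin 2) ℂ := !![0, 1; 1, 0]
/-- The Pauli matrix σ₂. -/
def pauli2 : Matrix (Fin 2) (Fin 2) ℂ := !![0, -I; I, 0]
/-- The Pauli matrix σ₃. -/
def pauli3 : Matrix (Fin 2) (Fin 2) ℂ := !![1, 0; 0, -1]

/-- The four Pauli matrices. -/
def pauli : Fin 4 → Matrix (Fin 2) (Fin 2) ℂ := ![pauli0, pauli1, pauli2, pauli3]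

/-- Kronecker product of two 2×2 complex matrices as a 4×4 matrix, with
entry `(2i+j, 2k+l)` equal to `A i k * B j l`. -/
def kron (A B : Matrix (Fin 2) (Fin 2) ℂ) : Matrix (Fin 4) (Fin 4) ℂ :=
  Matrix.reindex finProdFinEquiv finProdFinEquiv (A ⊗ₖ B)

/-- The Lorentz metric matrix `diag(1,-1,-1,-1)`. -/
def Mmetric : Matrix (Fin 4) (Fin 4) ℝ := Matrix.diagonal ![1, -1, -1, -1]

/-- A real 4×4 matrix is a proper orthochronous Lorentz transformation if
`L M Lᵀ = M`, `det L = 1` and `L₀₀ > 0`. -/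
def IsProperOrthochronousLorentz (L : Matrix (Fin 4) (Fin 4) ℝ) : Prop :=
  L * Mmetric * Lᵀ = Mmetric ∧ L.det = 1 ∧ 0 < L 0 0

/-- The matrix `T` transforming the density-matrix picture to the `R`-picture. -/
def Tmat : Matrix (Fin 4) (Fin 4) ℂ :=
  ((Real.sqrt 2 : ℂ))⁻¹ • !![1, 0, 0, 1; 0, 1, 1, 0; 0, I, -I, 0; 1, 0, 0, -1]

/-- The real parameterization `R(ρ)ᵢⱼ = Tr(ρ (σᵢ ⊗ σⱼ))` of a 4×4 matrix. -/
def Rmat (ρ : Matrix (Fin 4) (Fin 4) ℂ) : Matrix (Fin 4) (Fin 4) ℂ :=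
  fun i j => Matrix.trace (ρ * kron (pauli i) (pauli j))

/-- The Lorentz transformation `L(A) = T (A ⊗ A̅) T† / |det A|` associated
with a 2×2 matrix `A`. -/
def Lmat (A : Matrix (Fin 2) (Fin 2) ℂ) : Matrix (Fin 4) (Fin 4) ℂ :=
  ((‖A.det‖ : ℝ) : ℂ)⁻¹ • (Tmat * kron A (A.map (starRingEnd ℂ)) * Tmatᴴ)

/-- The singular values of a 4×4 complex matrix: the nonnegative square roots of
the eigenvalues of `Mᴴ M`. -/
def singularValues (M : Matrix (Fin 4) (Fin 4) ℂ) : Fin 4 → ℝ :=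
  fun i => Real.sqrt ((Matrix.isHermitian_conjTranspose_mul_self M).eigenvalues i)

/-- The multiset of singular values of a 4×4 complex matrix. -/
def singularValuesMultiset (M : Matrix (Fin 4) (Fin 4) ℂ) : Multiset ℝ :=
  Finset.univ.val.map (singularValues M)

/-- The positive semidefinite square root of a positive semidefinite matrix, as
`Matrix.PosSemidef.sqrt` was defined in the older Mathlib. -/
def psdSqrt {ρ : Matrix (Fin 4) (Fin 4) ℂ} (h : ρ.PosSemidef) : Matrix (Fin 4) (Fin 4) ℂ :=
  (h.1.eigenvectorUnitary : Matrix (Fin 4) (Fin 4) ℂ) *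
    diagonal ((↑) ∘ Real.sqrt ∘ h.1.eigenvalues) *
    (star h.1.eigenvectorUnitary : Matrix (Fin 4) (Fin 4) ℂ)

open scoped Classical in
/-- The concurrence of a two-qubit state `ρ`:
`max (0, τ₁ - τ₂ - τ₃ - τ₄) = max (0, 2 max τᵢ - ∑ τᵢ)` where the `τᵢ` are the
singular values of `Xᵀ (σ₂ ⊗ σ₂) X` with `ρ = X Xᴴ` (here `X = √ρ`). -/
def concurrence (ρ : Matrix (Fin 4) (Fin 4) ℂ) : ℝ :=
  if h : ρ.PosSemidef then
    let τ := singularValues ((psdSqrt h)ᵀ * kron pauli2 pauli2 * psdSqrt h)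
    max 0 (2 * Finset.univ.sup' Finset.univ_nonempty τ - ∑ i, τ i)
  else 0

/-- A two-qubit density matrix: positive semidefinite with trace 1. -/
def IsDensityMatrix (ρ : Matrix (Fin 4) (Fin 4) ℂ) : Prop :=
  ρ.PosSemidef ∧ ρ.trace = 1

/-- The reshuffled matrix `X̃` with `X̃_{2k+l,2k'+l'} = X_{2k+k',2l+l'}`. -/
def reshuffle (X : Matrix (Fin 4) (Fin 4) ℂ) : Matrix (Fin 4) (Fin 4) ℂ :=
  fun i j =>
    X ⟨2 * (i.val / 2) + j.val / 2, by have := i.isLt; have := j.isLt; omega⟩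
      ⟨2 * (i.val % 2) + j.val % 2, by have := i.isLt; have := j.isLt; omega⟩

/-- The partial transpose on the second qubit:
`(ρ^PT)_{2i+j,2k+l} = ρ_{2i+l,2k+j}`. -/
def ptranspose (ρ : Matrix (Fin 4) (Fin 4) ℂ) : Matrix (Fin 4) (Fin 4) ℂ :=
  fun a b =>
    ρ ⟨2 * (a.val / 2) + b.val % 2, by have := a.isLt; have := b.isLt; omega⟩
      ⟨2 * (b.val / 2) + a.val % 2, by have := a.isLt; have := b.isLt; omega⟩



/-! ### Auxiliary lemmas for the proof -/

lemma kron_eq (A B : Matrix (Fin 2) (Fin 2) ℂ) : kron A B =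
    !![A 0 0*B 0 0, A 0 0*B 0 1, A 0 1*B 0 0, A 0 1*B 0 1;
       A 0 0*B 1 0, A 0 0*B 1 1, A 0 1*B 1 0, A 0 1*B 1 1;
       A 1 0*B 0 0, A 1 0*B 0 1, A 1 1*B 0 0, A 1 1*B 0 1;
       A 1 0*B 1 0, A 1 0*B 1 1, A 1 1*B 1 0, A 1 1*B 1 1] := by
  ext i j
  fin_cases i <;> fin_cases j <;> rfl

/-- The family of matrices `a·|Φ⁺⟩⟨Φ⁺| + b·|01⟩⟨01|`. -/
def Wm (a b : ℝ) : Matrix (Fin 4) (Fin 4) ℂ :=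
  !![((a/2 : ℝ) : ℂ), 0, 0, ((a/2 : ℝ) : ℂ);
     0, ((b : ℝ) : ℂ), 0, 0;
     0, 0, 0, 0;
     ((a/2 : ℝ) : ℂ), 0, 0, ((a/2 : ℝ) : ℂ)]

lemma Wm_mul_Wm (a b c d : ℝ) : Wm a b * Wm c d = Wm (a*c) (b*d) := by
  ext i j
  fin_cases i <;> fin_cases j <;>
    simp [Wm, Matrix.mul_apply, Fin.sum_univ_four, Matrix.vecHead, Matrix.vecTail] <;>
    push_cast <;> ring

lemma Wm_conjTranspose (a b : ℝ) : (Wm a b)ᴴ = Wm a b := by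
  ext i j
  fin_cases i <;> fin_cases j <;>
    simp [Wm, Matrix.conjTranspose_apply, Complex.conj_ofReal, Matrix.vecHead, Matrix.vecTail]

lemma Wm_transpose (a b : ℝ) : (Wm a b)ᵀ = Wm a b := by
  ext i j
  fin_cases i <;> fin_cases j <;> simp [Wm, Matrix.transpose_apply, Matrix.vecHead, Matrix.vecTail]

lemma smul_Wm (c a b : ℝ) : ((c : ℝ) : ℂ) • Wm a b = Wm (c*a) (c*b) := by
  ext i j
  fin_cases i <;> fin_cases j <;> simp [Wm, Matrix.vecHead, Matrix.vecTail] <;> push_cast <;> ring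

lemma Wm_posSemidef {a b : ℝ} (ha : 0 ≤ a) (hb : 0 ≤ b) : (Wm a b).PosSemidef := by
  have h : Wm a b = (Wm (Real.sqrt a) (Real.sqrt b))ᴴ * Wm (Real.sqrt a) (Real.sqrt b) := by
    rw [Wm_conjTranspose, Wm_mul_Wm, Real.mul_self_sqrt ha, Real.mul_self_sqrt hb]
  rw [h]
  exact Matrix.posSemidef_conjTranspose_mul_self _

open scoped MatrixOrder in
lemma Wm_sqrt {a b : ℝ} (ha : 0 ≤ a) (hb : 0 ≤ b) (h : (Wm a b).PosSemidef) :
    psdSqrt h = Wm (Real.sqrt a) (Real.sqrt b) := by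
  have key : psdSqrt h = CFC.sqrt (Wm a b) := by
    rw [CFC.sqrt_eq_cfc, cfc_nnreal_eq_real _ (Wm a b), h.1.cfc_eq]
    have he : ∀ i, max (h.1.eigenvalues i) 0 = h.1.eigenvalues i :=
      fun i => max_eq_left (h.eigenvalues_nonneg i)
    simp only [psdSqrt, IsHermitian.cfc, Unitary.conjStarAlgAut_apply, Function.comp_def,
      Real.coe_sqrt, Real.coe_toNNReal', he]
    rfl
  rw [key]
  refine CFC.sqrt_unique ?_ (Wm_posSemidef (Real.sqrt_nonneg a) (Real.sqrt_nonneg b)).nonneg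
  rw [Wm_mul_Wm, Real.mul_self_sqrt ha, Real.mul_self_sqrt hb]

lemma kron_pauli2_pauli2 : kron pauli2 pauli2 = !![0,0,0,-1;0,0,1,0;0,1,0,0;-1,0,0,0] := by
  rw [kron_eq]
  norm_num [pauli2]

lemma Wm_S_Wm (a b : ℝ) : Wm a b * kron pauli2 pauli2 * Wm a b = Wm (-(a*a)) 0 := by
  rw [kron_pauli2_pauli2]
  ext i j
  fin_cases i <;> fin_cases j <;>
    simp [Wm, Matrix.mul_apply, Fin.sum_univ_four, Matrix.vecHead, Matrix.vecTail] <;>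
    push_cast <;> ring

lemma Wm_trace (a b : ℝ) : (Wm a b).trace = ((a + b : ℝ) : ℂ) := by
  simp [Matrix.trace, Wm, Fin.sum_univ_four, Matrix.vecHead, Matrix.vecTail]
  push_cast
  ring

lemma eigen_facts (q : ℝ) :
    (∀ i, (Matrix.isHermitian_conjTranspose_mul_self (Wm (-q) 0)).eigenvalues i = 0 ∨
          (Matrix.isHermitian_conjTranspose_mul_self (Wm (-q) 0)).eigenvalues i = q * q) ∧
    (∑ i, (Matrix.isHermitian_conjTranspose_mul_self (Wm (-q) 0)).eigenvalues i = q * q) := by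
  set M := Wm (-q) 0 with hMdef
  have hH := Matrix.isHermitian_conjTranspose_mul_self M
  have hN : Mᴴ * M = Wm (q*q) 0 := by
    rw [hMdef, Wm_conjTranspose, Wm_mul_Wm]; norm_num
  constructor
  · intro i
    have hv := hH.mulVec_eigenvectorBasis i
    set lam := hH.eigenvalues i with hlam
    set v : EuclideanSpace ℂ (Fin 4) := hH.eigenvectorBasis i with hvdef
    have hvne : (⇑v : Fin 4 → ℂ) ≠ 0 := by
      have := hH.eigenvectorBasis.orthonormal.ne_zero i
      intro h
      apply this
      ext k
      exact congrFun h k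
    obtain ⟨k, hk0⟩ := Function.ne_iff.mp hvne
    have hk : (⇑v : Fin 4 → ℂ) k ≠ 0 := by simpa using hk0
    have hNN : (Mᴴ * M) * (Mᴴ * M) = ((q*q : ℝ) : ℂ) • (Mᴴ * M) := by
      rw [hN, Wm_mul_Wm, smul_Wm]; norm_num
    have h1 : (Mᴴ * M) *ᵥ ((Mᴴ * M) *ᵥ ⇑v) = lam • lam • ⇑v := by
      rw [hv, Matrix.mulVec_smul, hv]
    have h2 : (Mᴴ * M) *ᵥ ((Mᴴ * M) *ᵥ ⇑v) = ((q*q : ℝ) : ℂ) • lam • ⇑v := by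
      rw [Matrix.mulVec_mulVec, hNN, Matrix.smul_mulVec, hv]
    have h3 := congrFun (h1.symm.trans h2) k
    simp only [Pi.smul_apply, Complex.real_smul, smul_eq_mul] at h3
    have h4 : ((lam*lam - q*q*lam : ℝ) : ℂ) * (⇑v : Fin 4 → ℂ) k = 0 := by
      push_cast at h3 ⊢
      linear_combination h3
    rcases mul_eq_zero.mp h4 with h | h
    · have h5 : lam*lam - q*q*lam = 0 := by exact_mod_cast h
      rcases mul_eq_zero.mp (show lam * (lam - q*q) = 0 by nlinarith) with h6 | h6
      · left; exact h6
      · right; linarith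
    · exact absurd h hk
  · have htr : (Mᴴ * M).trace = ((q*q : ℝ) : ℂ) := by
      rw [hN, Wm_trace]; norm_num
    have hspec := hH.spectral_theorem
    have hUU : (star (hH.eigenvectorUnitary : Matrix (Fin 4) (Fin 4) ℂ)) *
        (hH.eigenvectorUnitary : Matrix (Fin 4) (Fin 4) ℂ) = 1 :=
      Matrix.mem_unitaryGroup_iff'.mp hH.eigenvectorUnitary.2
    have h6 : (Mᴴ * M).trace = ∑ i, ((hH.eigenvalues i : ℂ)) := by
      conv_lhs => rw [hspec]
      rw [Unitary.conjStarAlgAut_apply, Matrix.trace_mul_cycle, hUU, Matrix.one_mul, Matrix.trace_diagonal]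
      rfl
    rw [htr] at h6
    have h7 := h6.symm
    push_cast at h7
    exact_mod_cast h7

lemma sv_bound (q : ℝ) (hq : 0 < q) :
    q ≤ 2 * Finset.univ.sup' Finset.univ_nonempty (singularValues (Wm (-q) 0)) -
      ∑ i, singularValues (Wm (-q) 0) i := by
  obtain ⟨hmem, hsum⟩ := eigen_facts q
  set lam := (Matrix.isHermitian_conjTranspose_mul_self (Wm (-q) 0)).eigenvalues with hlam
  rw [Fin.sum_univ_four] at hsum
  have hs0 : Real.sqrt 0 = 0 := Real.sqrt_zero
  have hsq : Real.sqrt (q*q) = q := Real.sqrt_mul_self hq.le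
  have hsum' : Real.sqrt (lam 0) + Real.sqrt (lam 1) + Real.sqrt (lam 2) + Real.sqrt (lam 3) = q ∧
      ∃ i0 : Fin 4, Real.sqrt (lam i0) = q := by
    rcases hmem 0 with h0|h0 <;> rcases hmem 1 with h1|h1 <;>
      rcases hmem 2 with h2|h2 <;> rcases hmem 3 with h3|h3 <;>
      first
        | (exfalso; rw [h0, h1, h2, h3] at hsum; nlinarith)
        | (refine ⟨by rw [h0, h1, h2, h3]; simp [hsq], ?_⟩
           first
             | exact ⟨0, by rw [h0, hsq]⟩
             | exact ⟨1, by rw [h1, hsq]⟩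
             | exact ⟨2, by rw [h2, hsq]⟩
             | exact ⟨3, by rw [h3, hsq]⟩)
  have hsveq : ∀ i, singularValues (Wm (-q) 0) i = Real.sqrt (lam i) := fun i => rfl
  have hSum : ∑ i, singularValues (Wm (-q) 0) i = q := by
    rw [Fin.sum_univ_four, hsveq 0, hsveq 1, hsveq 2, hsveq 3]
    exact hsum'.1
  obtain ⟨i0, hi0⟩ := hsum'.2
  have hsup : q ≤ Finset.univ.sup' Finset.univ_nonempty (singularValues (Wm (-q) 0)) := by
    have := Finset.le_sup' (singularValues (Wm (-q) 0)) (Finset.mem_univ i0)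
    rw [hsveq i0, hi0] at this
    exact this
  rw [hSum]
  linarith

lemma concurrence_Wm (q : ℝ) (hq0 : 0 < q) (hq1 : q ≤ 1) :
    q ≤ concurrence (Wm q (1-q)) := by
  have hPSD : (Wm q (1-q)).PosSemidef := Wm_posSemidef hq0.le (by linarith)
  have hMeq : (psdSqrt hPSD)ᵀ * kron pauli2 pauli2 * psdSqrt hPSD = Wm (-q) 0 := by
    rw [Wm_sqrt hq0.le (by linarith) hPSD, Wm_transpose, Wm_S_Wm,
      Real.mul_self_sqrt hq0.le]
  rw [concurrence, dif_pos hPSD]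
  simp only [hMeq]
  have := sv_bound q hq0
  exact le_max_of_le_right this

set_option maxHeartbeats 1600000

/-- the state `ρ = p |Φ⁺⟩⟨Φ⁺| + (1−p) |01⟩⟨01|` (`0 < p < 1`) can be
quasi-purified arbitrarily close to a maximally entangled state. -/
theorem quasi_purification (p : ℝ) (hp0 : 0 < p) (hp1 : p < 1)
    (ρ : Matrix (Fin 4) (Fin 4) ℂ)
    (hρdef : ρ = (p : ℂ) •
        Matrix.vecMulVec
          (((Real.sqrt 2 : ℂ))⁻¹ • (Pi.single (0 : Fin 4) (1 : ℂ) + Pi.single 3 1))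
          (star (((Real.sqrt 2 : ℂ))⁻¹ • (Pi.single (0 : Fin 4) (1 : ℂ) + Pi.single 3 1))) +
      ((1 - p : ℝ) : ℂ) •
        Matrix.vecMulVec (Pi.single (1 : Fin 4) (1 : ℂ))
          (star (Pi.single (1 : Fin 4) (1 : ℂ)))) :
    ∀ ε > (0 : ℝ), ∃ (A B : Matrix (Fin 2) (Fin 2) ℂ) (t : ℝ),
      IsUnit A ∧ IsUnit B ∧ 0 < t ∧
      Matrix.trace (kron (Aᴴ * A) (Bᴴ * B) * ρ) = (t : ℂ) ∧
      1 - ε < concurrence ((t : ℂ)⁻¹ • (kron A B * ρ * (kron A B)ᴴ)) := by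
  intro ε hε
  -- the filtering strength
  set d : ℝ := min 1 (ε * p) with hddef
  have hd0 : 0 < d := lt_min one_pos (mul_pos hε hp0)
  have hd1 : d ≤ 1 := min_le_left _ _
  have hdε : d ≤ ε * p := min_le_right _ _
  set δ : ℝ := Real.sqrt d with hδdef
  have hδ0 : 0 < δ := Real.sqrt_pos.mpr hd0
  have hδδ : δ * δ = d := Real.mul_self_sqrt hd0.le
  set t : ℝ := d * p + d^2 * (1-p) with htdef
  have ht0 : 0 < t := by nlinarith
  set q : ℝ := d * p / t with hqdef
  have hq0 : 0 < q := div_pos (by nlinarith) ht0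
  have hq1 : q ≤ 1 := by
    rw [hqdef, div_le_one ht0]; nlinarith
  have hqε : 1 - ε < q := by
    rw [hqdef, lt_div_iff₀ ht0]
    rcases le_or_gt 1 ε with h | h
    · nlinarith [mul_pos hd0 hp0]
    · have h4 : (1-ε)*(1-p) < 1 := by nlinarith
      have h5 : (1-ε)*d*(1-p) < d := by nlinarith
      have h6 : 0 < d * (ε*p - (1-ε)*d*(1-p)) :=
        mul_pos hd0 (by linarith [lt_of_lt_of_le h5 hdε])
      nlinarith [h6]
  have h1q : 1 - q = d^2 * (1-p) / t := by
    rw [hqdef]; field_simp; ring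
  have hs2 : Real.sqrt 2 * Real.sqrt 2 = 2 := Real.mul_self_sqrt (by norm_num)
  have hc2 : ((Real.sqrt 2 : ℂ))⁻¹ * ((Real.sqrt 2 : ℂ))⁻¹ = 2⁻¹ := by
    rw [← mul_inv]
    rw [show ((Real.sqrt 2 : ℂ)) * (Real.sqrt 2 : ℂ) = 2 by exact_mod_cast congrArg (Complex.ofReal) hs2]
  have hρW : ρ = Wm p (1-p) := by
    rw [hρdef]
    ext i j
    fin_cases i <;> fin_cases j <;>
      (simp [Wm, Matrix.vecMulVec_apply, Pi.single_apply, Matrix.vecHead, Matrix.vecTail,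
         Complex.conj_ofReal, Matrix.add_apply, Matrix.smul_apply, smul_eq_mul, hc2]
       try push_cast
       try ring)
  have hkAB : kron !![(δ : ℂ), 0; 0, 1] !![1, 0; 0, (δ : ℂ)] =
      !![(δ : ℂ),0,0,0; 0,((d : ℝ) : ℂ),0,0; 0,0,1,0; 0,0,0,(δ : ℂ)] := by
    rw [kron_eq]
    norm_num
    rw [← hδδ]
    push_cast
    ring
  -- the filtering matrices
  refine ⟨!![(δ : ℂ), 0; 0, 1], !![1, 0; 0, (δ : ℂ)], t, ?_, ?_, ht0, ?_, ?_⟩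
  · rw [Matrix.isUnit_iff_isUnit_det, Matrix.det_fin_two_of]
    simp only [mul_one, mul_zero, sub_zero]
    exact isUnit_iff_ne_zero.mpr (by exact_mod_cast hδ0.ne')
  · rw [Matrix.isUnit_iff_isUnit_det, Matrix.det_fin_two_of]
    simp only [one_mul, zero_mul, sub_zero]
    exact isUnit_iff_ne_zero.mpr (by exact_mod_cast hδ0.ne')
  · -- trace condition
    have hAA : (!![(δ : ℂ), 0; 0, 1])ᴴ * !![(δ : ℂ), 0; 0, 1] = !![((d : ℝ) : ℂ), 0; 0, 1] := by
      ext i j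
      fin_cases i <;> fin_cases j <;>
        simp [Matrix.mul_apply, Fin.sum_univ_two, Matrix.conjTranspose_apply,
          Complex.conj_ofReal, Matrix.vecHead, Matrix.vecTail] <;>
        (rw [← hδδ]; push_cast; ring)
    have hBB : (!![1, 0; 0, (δ : ℂ)])ᴴ * !![1, 0; 0, (δ : ℂ)] = !![1, 0; 0, ((d : ℝ) : ℂ)] := by
      ext i j
      fin_cases i <;> fin_cases j <;>
        simp [Matrix.mul_apply, Fin.sum_univ_two, Matrix.conjTranspose_apply,
          Complex.conj_ofReal, Matrix.vecHead, Matrix.vecTail] <;>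
        (rw [← hδδ]; push_cast; ring)
    have hkron2 : kron !![((d : ℝ) : ℂ),0;0,1] !![1,0;0,((d : ℝ) : ℂ)] =
        !![((d : ℝ) : ℂ),0,0,0; 0,((d : ℝ) : ℂ)*((d : ℝ) : ℂ),0,0; 0,0,1,0; 0,0,0,((d : ℝ) : ℂ)] := by
      rw [kron_eq]
      norm_num
    rw [hAA, hBB, hρW, hkron2]
    simp [Matrix.trace, Matrix.diag, Matrix.mul_apply, Fin.sum_univ_four, Wm,
      Matrix.vecHead, Matrix.vecTail]
    rw [htdef]
    push_cast
    ring
  · -- concurrence condition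
    have hDH : (!![(δ : ℂ),0,0,0; 0,((d : ℝ) : ℂ),0,0; 0,0,1,0; 0,0,0,(δ : ℂ)])ᴴ =
        !![(δ : ℂ),0,0,0; 0,((d : ℝ) : ℂ),0,0; 0,0,1,0; 0,0,0,(δ : ℂ)] := by
      ext i j
      fin_cases i <;> fin_cases j <;>
        simp [Matrix.conjTranspose_apply, Complex.conj_ofReal, Matrix.vecHead, Matrix.vecTail]
    have hfilter : kron !![(δ : ℂ), 0; 0, 1] !![1, 0; 0, (δ : ℂ)] * ρ *
        (kron !![(δ : ℂ), 0; 0, 1] !![1, 0; 0, (δ : ℂ)])ᴴ = Wm (d*p) (d^2*(1-p)) := by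
      have hstep : !![(δ : ℂ),0,0,0; 0,((d : ℝ) : ℂ),0,0; 0,0,1,0; 0,0,0,(δ : ℂ)] * Wm p (1-p) =
          !![(δ : ℂ) * ((p/2 : ℝ) : ℂ),0,0,(δ : ℂ) * ((p/2 : ℝ) : ℂ);
             0,((d : ℝ) : ℂ) * ((1-p : ℝ) : ℂ),0,0;
             0,0,0,0;
             (δ : ℂ) * ((p/2 : ℝ) : ℂ),0,0,(δ : ℂ) * ((p/2 : ℝ) : ℂ)] := by
        ext i j
        fin_cases i <;> fin_cases j <;>
          (simp [Wm, Matrix.mul_apply, Fin.sum_univ_four, Matrix.vecHead, Matrix.vecTail]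
           try ring)
      rw [hkAB, hρW, hDH, hstep]
      ext i j
      fin_cases i <;> fin_cases j <;>
        (simp [Wm, Matrix.mul_apply, Fin.sum_univ_four, Matrix.vecHead, Matrix.vecTail]
         try rw [← hδδ]
         try push_cast
         try ring)
    rw [hfilter, show ((t : ℝ) : ℂ)⁻¹ = (((t⁻¹ : ℝ)) : ℂ) from (Complex.ofReal_inv t).symm,
      smul_Wm, show t⁻¹ * (d*p) = q by rw [hqdef, div_eq_mul_inv]; ring,
      show t⁻¹ * (d^2*(1-p)) = 1 - q by rw [h1q, div_eq_mul_inv]; ring]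
    exact lt_of_lt_of_le hqε (concurrence_Wm q hq0 hq1)
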